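/- For a one-dimensional left-truncated exponential family, if there exists some distribution Q_dom with sup_{β ∈ Γ} D(P_β ‖ Q_dom) < ∞, then there exists a member P_{β*} of the family itself (β* ∈ Γ) with sup_{β ∈ Γ} D(P_β ‖ P_{β*}) < ∞. -/

import Mathlib

open scoped ENNReal NNReal
open MeasureTheory Real Set Filter Topology Asymptotics ProbabilityTheory

noncomputable section

/-- Partition function of the exponential family generated by `Q`. -/
def Z (Q : Measure ℝ) (β : ℝ) : ℝ≥0∞ := ∫⁻ x, ENNReal.ofReal (Real.exp (β * x)) ∂Q

/-- Canonical parameter space. -/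
def Γcan (Q : Measure ℝ) : Set ℝ := {β | Z Q β < ⊤}

/-- The member of the exponential family with canonical parameter `β`:
`dP_β/dQ = e^{βx}/Z(β)`. -/
def Pexp (Q : Measure ℝ) (β : ℝ) : Measure ℝ :=
  Q.withDensity (fun x => ENNReal.ofReal (Real.exp (β * x)) / Z Q β)

/-- Log-partition function. -/
def ψ (Q : Measure ℝ) (β : ℝ) : ℝ := Real.log (Z Q β).toReal

open Classical in
/-- Kullback–Leibler divergence (in nats), valued in `ℝ≥0∞`. -/
def KL (P Q' : Measure ℝ) : ℝ≥0∞ :=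
  if P ≪ Q' ∧ Integrable (fun x => Real.log (P.rnDeriv Q' x).toReal) P
  then ENNReal.ofReal (∫ x, Real.log (P.rnDeriv Q' x).toReal ∂P) else ⊤

/-- `Q` is supported on a half-line bounded below (left-truncated family). -/
def LeftTruncated (Q : Measure ℝ) : Prop := ∃ a : ℝ, ∀ᵐ x ∂Q, a ≤ x
section Aux
variable {Q : Measure ℝ}

lemma measurable_expd (β : ℝ) : Measurable fun x : ℝ => ENNReal.ofReal (Real.exp (β * x)) :=
  (measurable_const.mul measurable_id).exp.ennreal_ofReal

lemma measurable_dens (β : ℝ) :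
    Measurable fun x : ℝ => ENNReal.ofReal (Real.exp (β * x)) / Z Q β :=
  (measurable_expd β).div measurable_const

lemma Z_ne_zero [IsProbabilityMeasure Q] (β : ℝ) : Z Q β ≠ 0 := by
  intro h
  rw [Z, lintegral_eq_zero_iff (measurable_expd β)] at h
  have : ∀ᵐ x ∂Q, False := by
    filter_upwards [h] with x hx
    simp only [Pi.zero_apply, ENNReal.ofReal_eq_zero] at hx
    exact absurd hx (not_le.mpr (Real.exp_pos _))
  rw [ae_iff] at this
  simp [measure_univ] at this

lemma Z_zero [IsProbabilityMeasure Q] : Z Q 0 = 1 := by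
  simp [Z]

lemma zero_mem_Γ [IsProbabilityMeasure Q] : (0:ℝ) ∈ Γcan Q := by
  simp [Γcan, Z_zero]

lemma Z_le_of_ae (c : ℝ) {β : ℝ} (h : ∀ᵐ x ∂Q, β * x ≤ c) [IsProbabilityMeasure Q] :
    Z Q β ≤ ENNReal.ofReal (Real.exp c) := by
  calc Z Q β ≤ ∫⁻ _, ENNReal.ofReal (Real.exp c) ∂Q := by
        refine lintegral_mono_ae ?_
        filter_upwards [h] with x hx
        exact ENNReal.ofReal_le_ofReal (Real.exp_le_exp.mpr hx)
    _ = ENNReal.ofReal (Real.exp c) := by simp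

lemma neg_mem_Γ [IsProbabilityMeasure Q] {a : ℝ} (ha : ∀ᵐ x ∂Q, a ≤ x) {β : ℝ} (hβ : β ≤ 0) :
    β ∈ Γcan Q := by
  have h : ∀ᵐ x ∂Q, β * x ≤ β * a := by
    filter_upwards [ha] with x hx
    exact mul_le_mul_of_nonpos_left hx hβ
  exact lt_of_le_of_lt (Z_le_of_ae _ h) ENNReal.ofReal_lt_top

lemma mem_Γ_of_le [IsProbabilityMeasure Q] {β β' : ℝ} (h0 : 0 ≤ β) (h1 : β ≤ β')
    (h' : β' ∈ Γcan Q) : β ∈ Γcan Q := by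
  have hpt : ∀ x : ℝ, ENNReal.ofReal (Real.exp (β * x)) ≤
      1 + ENNReal.ofReal (Real.exp (β' * x)) := by
    intro x
    rcases le_or_gt 0 x with hx | hx
    · exact le_add_of_nonneg_of_le zero_le
        (ENNReal.ofReal_le_ofReal (Real.exp_le_exp.mpr (mul_le_mul_of_nonneg_right h1 hx)))
    · refine le_add_of_le_of_nonneg ?_ zero_le
      have hb : β * x ≤ 0 := mul_nonpos_of_nonneg_of_nonpos h0 hx.le
      have : Real.exp (β * x) ≤ 1 := by
        simpa using Real.exp_le_exp.mpr hb
      calc ENNReal.ofReal (Real.exp (β * x)) ≤ ENNReal.ofReal 1 := ENNReal.ofReal_le_ofReal this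
        _ = 1 := by simp
  have : Z Q β ≤ 1 + Z Q β' := by
    calc Z Q β ≤ ∫⁻ x, (1 + ENNReal.ofReal (Real.exp (β' * x))) ∂Q := lintegral_mono hpt
      _ = 1 + Z Q β' := by rw [lintegral_add_left measurable_const]; simp [Z]
  exact lt_of_le_of_lt this (by simpa using (ENNReal.add_lt_top.mpr ⟨ENNReal.one_lt_top, h'⟩))

lemma all_mem_Γ_of_bdd [IsProbabilityMeasure Q] {a b : ℝ} (ha : ∀ᵐ x ∂Q, a ≤ x)
    (hb : ∀ᵐ x ∂Q, x ≤ b) (β : ℝ) : β ∈ Γcan Q := by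
  have h : ∀ᵐ x ∂Q, β * x ≤ |β| * (|a| + |b|) := by
    filter_upwards [ha, hb] with x h1 h2
    have hx : |x| ≤ |a| + |b| := by
      rcases le_or_gt 0 x with h | h
      · have : x ≤ |b| := le_trans h2 (le_abs_self b)
        rw [abs_of_nonneg h]; linarith [abs_nonneg a]
      · have : -x ≤ |a| := by have := neg_le_neg h1; exact this.trans (neg_le_abs a)
        rw [abs_of_neg h]; linarith [abs_nonneg b]
    calc β * x ≤ |β * x| := le_abs_self _
      _ = |β| * |x| := abs_mul _ _
      _ ≤ |β| * (|a| + |b|) := mul_le_mul_of_nonneg_left hx (abs_nonneg β)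
  exact lt_of_le_of_lt (Z_le_of_ae _ h) ENNReal.ofReal_lt_top

end Aux
section Pexp
variable {Q : Measure ℝ} [IsProbabilityMeasure Q] {β : ℝ}

lemma Z_pos (β : ℝ) : 0 < Z Q β := pos_iff_ne_zero.mpr (Z_ne_zero β)

lemma Z_toReal_pos (hβ : β ∈ Γcan Q) : 0 < (Z Q β).toReal :=
  ENNReal.toReal_pos (Z_ne_zero β) hβ.ne

lemma Pexp_apply {s : Set ℝ} (hs : MeasurableSet s) :
    Pexp Q β s = (∫⁻ x in s, ENNReal.ofReal (Real.exp (β * x)) ∂Q) / Z Q β := by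
  rw [Pexp, withDensity_apply _ hs]
  simp_rw [div_eq_mul_inv]
  rw [lintegral_mul_const' _ _ (by simp [Z_ne_zero β])]

lemma Pexp_univ : Pexp Q β univ = Z Q β / Z Q β := by
  rw [Pexp_apply MeasurableSet.univ]; simp [Z, Measure.restrict_univ]

instance : SigmaFinite (Pexp Q β) := by
  refine SigmaFinite.withDensity_of_ne_top (ae_of_all _ fun x => ?_)
  simp only [ne_eq, ENNReal.div_eq_top, not_or, not_and_or]
  exact ⟨Or.inr (fun h => absurd h (Z_ne_zero β)), Or.inl (by simp)⟩

lemma isProb_Pexp (hβ : β ∈ Γcan Q) : IsProbabilityMeasure (Pexp Q β) := by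
  constructor
  rw [Pexp_univ, ENNReal.div_self (Z_ne_zero β) hβ.ne]

lemma Pexp_ac : Pexp Q β ≪ Q := withDensity_absolutelyContinuous _ _

lemma ac_Pexp (hβ : β ∈ Γcan Q) : Q ≪ Pexp Q β := by
  refine withDensity_absolutelyContinuous' (measurable_dens β).aemeasurable ?_
  refine ae_of_all _ fun x => ?_
  simp only [ne_eq, ENNReal.div_eq_zero_iff, ENNReal.ofReal_eq_zero, not_or]
  exact ⟨fun h => absurd h (not_le.mpr (Real.exp_pos _)), hβ.ne⟩

lemma ae_Pexp {p : ℝ → Prop} (h : ∀ᵐ x ∂Q, p x) : ∀ᵐ x ∂(Pexp Q β), p x :=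
  Pexp_ac.ae_le h

lemma Z_ge_singleton (β c : ℝ) : ENNReal.ofReal (Real.exp (β * c)) * Q {c} ≤ Z Q β := by
  calc ENNReal.ofReal (Real.exp (β * c)) * Q {c}
      = ∫⁻ x in {c}, ENNReal.ofReal (Real.exp (β * x)) ∂Q := by
        rw [lintegral_singleton]
    _ ≤ Z Q β := setLIntegral_le_lintegral _ _

lemma ψ_ge_atom {c : ℝ} (hc : 0 < Q {c}) (hβ : β ∈ Γcan Q) :
    β * c + Real.log (Q {c}).toReal ≤ ψ Q β := by
  have hQc_top : Q {c} ≠ ⊤ := (measure_lt_top Q _).ne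
  have h1 : Real.exp (β * c) * (Q {c}).toReal ≤ (Z Q β).toReal := by
    have := Z_ge_singleton (Q := Q) β c
    have h2 : (ENNReal.ofReal (Real.exp (β * c)) * Q {c}).toReal ≤ (Z Q β).toReal :=
      ENNReal.toReal_mono hβ.ne this
    rwa [ENNReal.toReal_mul, ENNReal.toReal_ofReal (Real.exp_pos _).le] at h2
  have hpos : 0 < Real.exp (β * c) * (Q {c}).toReal :=
    mul_pos (Real.exp_pos _) (ENNReal.toReal_pos hc.ne' hQc_top)
  calc β * c + Real.log (Q {c}).toReal
      = Real.log (Real.exp (β * c) * (Q {c}).toReal) := by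
        rw [Real.log_mul (Real.exp_pos _).ne' (ENNReal.toReal_pos hc.ne' hQc_top).ne',
          Real.log_exp]
    _ ≤ ψ Q β := Real.log_le_log hpos h1

end Pexp
section RN
variable {Q : Measure ℝ} [IsProbabilityMeasure Q] {β β' : ℝ}

lemma rnDeriv_Pexp (hβ' : β' ∈ Γcan Q) :
    (Pexp Q β).rnDeriv (Pexp Q β') =ᵐ[Q]
      fun x => (ENNReal.ofReal (Real.exp (β' * x)) / Z Q β')⁻¹ *
        (ENNReal.ofReal (Real.exp (β * x)) / Z Q β) := by
  have hne0 : ∀ᵐ x ∂Q, ENNReal.ofReal (Real.exp (β' * x)) / Z Q β' ≠ 0 := by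
    refine ae_of_all _ fun x => ?_
    simp only [ne_eq, ENNReal.div_eq_zero_iff, ENNReal.ofReal_eq_zero, not_or]
    exact ⟨fun h => absurd h (not_le.mpr (Real.exp_pos _)), hβ'.ne⟩
  have hnetop : ∀ᵐ x ∂Q, ENNReal.ofReal (Real.exp (β' * x)) / Z Q β' ≠ ⊤ := by
    refine ae_of_all _ fun x => ?_
    simp only [ne_eq, ENNReal.div_eq_top, not_or, not_and_or]
    exact ⟨Or.inr (fun h => absurd h (Z_ne_zero β')), Or.inl (by simp)⟩
  have h1 := Measure.rnDeriv_withDensity_right (Pexp Q β) Q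
    (measurable_dens β').aemeasurable hne0 hnetop
  have h2 : (Pexp Q β).rnDeriv Q =ᵐ[Q] fun x => ENNReal.ofReal (Real.exp (β * x)) / Z Q β :=
    Measure.rnDeriv_withDensity Q (measurable_dens β)
  filter_upwards [h1, h2] with x hx1 hx2
  rw [show Pexp Q β' = Q.withDensity
    (fun x => ENNReal.ofReal (Real.exp (β' * x)) / Z Q β') from rfl] at *
  rw [hx1, hx2]

lemma logRN_Pexp (hβ : β ∈ Γcan Q) (hβ' : β' ∈ Γcan Q) :
    (fun x => Real.log (((Pexp Q β).rnDeriv (Pexp Q β') x)).toReal) =ᵐ[Pexp Q β]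
      fun x => (β - β') * x + (ψ Q β' - ψ Q β) := by
  refine (ae_Pexp (rnDeriv_Pexp (β := β) hβ')).mono fun x hx => ?_
  simp only []
  rw [hx]
  have e1 : ∀ (γ : ℝ) (hγ : γ ∈ Γcan Q),
      (ENNReal.ofReal (Real.exp (γ * x)) / Z Q γ).toReal = Real.exp (γ * x) / (Z Q γ).toReal := by
    intro γ hγ
    rw [ENNReal.toReal_div, ENNReal.toReal_ofReal (Real.exp_pos _).le]
  rw [ENNReal.toReal_mul, ENNReal.toReal_inv, e1 β hβ, e1 β' hβ']
  have hz := Z_toReal_pos hβ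
  have hz' := Z_toReal_pos hβ'
  rw [Real.log_mul (by positivity) (by positivity), Real.log_inv,
    Real.log_div (Real.exp_pos _).ne' hz'.ne', Real.log_div (Real.exp_pos _).ne' hz.ne',
    Real.log_exp, Real.log_exp]
  unfold ψ
  ring

lemma KL_Pexp_eq (hβ : β ∈ Γcan Q) (hβ' : β' ∈ Γcan Q)
    (hint : Integrable (fun x => (β - β') * x) (Pexp Q β)) :
    KL (Pexp Q β) (Pexp Q β') =
      ENNReal.ofReal (∫ x, ((β - β') * x + (ψ Q β' - ψ Q β)) ∂(Pexp Q β)) := by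
  haveI := isProb_Pexp hβ
  have hac : Pexp Q β ≪ Pexp Q β' := Pexp_ac.trans (ac_Pexp hβ')
  have hint2 : Integrable (fun x => Real.log (((Pexp Q β).rnDeriv (Pexp Q β') x)).toReal)
      (Pexp Q β) := (hint.add (integrable_const _)).congr (logRN_Pexp hβ hβ').symm
  rw [KL, if_pos ⟨hac, hint2⟩, integral_congr_ae (logRN_Pexp hβ hβ')]

end RN
section Integ
variable {Q : Measure ℝ} [IsProbabilityMeasure Q] {β β' : ℝ}

lemma int_id_of_bdd {a b : ℝ} (ha : ∀ᵐ x ∂Q, a ≤ x) (hb : ∀ᵐ x ∂Q, x ≤ b)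
    (hβ : β ∈ Γcan Q) : Integrable (fun x : ℝ => x) (Pexp Q β) := by
  haveI := isProb_Pexp hβ
  refine (integrable_const (|a| + |b|)).mono' aestronglyMeasurable_id ?_
  filter_upwards [ae_Pexp (β := β) ha, ae_Pexp (β := β) hb] with x h1 h2
  rw [Real.norm_eq_abs]
  rcases le_or_gt 0 x with h | h
  · rw [abs_of_nonneg h]
    have : x ≤ |b| := h2.trans (le_abs_self b)
    linarith [abs_nonneg a]
  · rw [abs_of_neg h]
    have : -x ≤ |a| := (neg_le_neg h1).trans (neg_le_abs a)
    linarith [abs_nonneg b]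

lemma int_id_of_lt {a₀ : ℝ} (ha : ∀ᵐ x ∂Q, a₀ ≤ x) (hβ' : β' ∈ Γcan Q) (hlt : β < β') :
    Integrable (fun x : ℝ => x) (Pexp Q β) := by
  set c : ℝ := β' - β with hc
  have hcpos : 0 < c := by simp [hc]; linarith
  set K : ℝ := (|a₀| + 1/c) * Real.exp (-(c * a₀)) with hK
  have hKpos : 0 < K := by positivity
  refine ⟨aestronglyMeasurable_id, ?_⟩
  rw [hasFiniteIntegral_def, Pexp,
    lintegral_withDensity_eq_lintegral_mul _ (measurable_dens β) measurable_enorm]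
  have hb : ∀ᵐ x ∂Q, (ENNReal.ofReal (Real.exp (β * x)) / Z Q β * (‖x‖₊ : ℝ≥0∞)) ≤
      (Z Q β)⁻¹ * ENNReal.ofReal (K * Real.exp (β' * x)) := by
    filter_upwards [ha] with x hx
    have hreal : |x| * Real.exp (β * x) ≤ K * Real.exp (β' * x) := by
      have h1 : |x| ≤ |a₀| + (x - a₀) := by
        have h := abs_sub_abs_le_abs_sub x a₀
        rw [abs_of_nonneg (by linarith : (0:ℝ) ≤ x - a₀)] at h
        linarith
      have h2 : |a₀| * Real.exp (β * x) ≤ |a₀| * Real.exp (-(c * a₀)) * Real.exp (β' * x) := by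
        rw [mul_assoc, ← Real.exp_add]
        refine mul_le_mul_of_nonneg_left (Real.exp_le_exp.mpr ?_) (abs_nonneg a₀)
        have hca : c * a₀ ≤ c * x := mul_le_mul_of_nonneg_left hx hcpos.le
        have hcx : c * x = β' * x - β * x := by rw [hc]; ring
        linarith
      have h3 : (x - a₀) * Real.exp (β * x) ≤ (1/c) * Real.exp (-(c * a₀)) * Real.exp (β' * x) := by
        have ht : c * (x - a₀) ≤ Real.exp (c * (x - a₀)) := by
          linarith [Real.add_one_le_exp (c * (x - a₀))]
        have h4 : x - a₀ ≤ (1/c) * Real.exp (c * (x - a₀)) := by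
          rw [div_mul_eq_mul_div, le_div_iff₀ hcpos]
          linarith [mul_comm c (x - a₀)]
        calc (x - a₀) * Real.exp (β * x) ≤ (1/c) * Real.exp (c * (x - a₀)) * Real.exp (β * x) :=
              mul_le_mul_of_nonneg_right h4 (Real.exp_pos _).le
          _ = (1/c) * Real.exp (-(c * a₀)) * Real.exp (β' * x) := by
              rw [mul_assoc, mul_assoc, ← Real.exp_add, ← Real.exp_add]
              congr 2
              ring
      calc |x| * Real.exp (β * x) ≤ (|a₀| + (x - a₀)) * Real.exp (β * x) :=
            mul_le_mul_of_nonneg_right h1 (Real.exp_pos _).le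
        _ = |a₀| * Real.exp (β * x) + (x - a₀) * Real.exp (β * x) := by ring
        _ ≤ |a₀| * Real.exp (-(c * a₀)) * Real.exp (β' * x)
            + (1/c) * Real.exp (-(c * a₀)) * Real.exp (β' * x) := add_le_add h2 h3
        _ = K * Real.exp (β' * x) := by rw [hK]; ring
    calc ENNReal.ofReal (Real.exp (β * x)) / Z Q β * (‖x‖₊ : ℝ≥0∞)
        = (Z Q β)⁻¹ * (ENNReal.ofReal (Real.exp (β * x)) * ENNReal.ofReal |x|) := by
          rw [← enorm_eq_nnnorm, enorm_eq_ofReal_abs, div_eq_mul_inv]; ring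
      _ = (Z Q β)⁻¹ * ENNReal.ofReal (|x| * Real.exp (β * x)) := by
          rw [← ENNReal.ofReal_mul (Real.exp_pos _).le, mul_comm (Real.exp (β * x)) _]
      _ ≤ (Z Q β)⁻¹ * ENNReal.ofReal (K * Real.exp (β' * x)) := by
          exact mul_le_mul_right (ENNReal.ofReal_le_ofReal hreal) _
  calc ∫⁻ x, ENNReal.ofReal (Real.exp (β * x)) / Z Q β * (‖x‖₊ : ℝ≥0∞) ∂Q
      ≤ ∫⁻ x, (Z Q β)⁻¹ * ENNReal.ofReal (K * Real.exp (β' * x)) ∂Q := lintegral_mono_ae hb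
    _ = (Z Q β)⁻¹ * ∫⁻ x, ENNReal.ofReal (K * Real.exp (β' * x)) ∂Q := by
        rw [lintegral_const_mul _ (by
          exact ((measurable_const.mul ((measurable_const.mul measurable_id).exp)).ennreal_ofReal))]
    _ = (Z Q β)⁻¹ * (ENNReal.ofReal K * Z Q β') := by
        congr 1
        simp_rw [ENNReal.ofReal_mul hKpos.le]
        rw [lintegral_const_mul _ (measurable_expd β')]
        rfl
    _ < ⊤ := by
        refine ENNReal.mul_lt_top ?_ (ENNReal.mul_lt_top ENNReal.ofReal_lt_top hβ')
        simp [ENNReal.inv_lt_top, Z_pos β]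

lemma integral_bound_left (hβ : β ∈ Γcan Q) (hβ' : β' ∈ Γcan Q) (hle : β ≤ β')
    {a₀ : ℝ} (ha : ∀ᵐ x ∂Q, a₀ ≤ x) (hatom : 0 < Q {a₀})
    (hint : Integrable (fun x : ℝ => (β - β') * x) (Pexp Q β)) :
    ∫ x, ((β - β') * x + (ψ Q β' - ψ Q β)) ∂(Pexp Q β) ≤
      ψ Q β' - β' * a₀ - Real.log (Q {a₀}).toReal := by
  haveI := isProb_Pexp hβ
  rw [integral_add hint (integrable_const _), integral_const]
  simp only [measure_univ, probReal_univ, ENNReal.toReal_one, one_smul, smul_eq_mul]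
  have h1 : ∫ x, (β - β') * x ∂(Pexp Q β) ≤ (β - β') * a₀ := by
    have : ∫ x, ((β - β') * a₀ : ℝ) ∂(Pexp Q β) = (β - β') * a₀ := by
      rw [integral_const]; simp
    rw [← this]
    refine integral_mono_ae hint (integrable_const _) ?_
    filter_upwards [ae_Pexp (β := β) ha] with x hx
    exact mul_le_mul_of_nonpos_left hx (by linarith)
  have h2 := ψ_ge_atom hatom hβ
  linarith

end Integ
section Key
variable {P R : Measure ℝ}

lemma inv_rnDeriv_setIntegral [IsFiniteMeasure P] [IsFiniteMeasure R] (hPR : P ≪ R)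
    {S : Set ℝ} (hS : MeasurableSet S) :
    Integrable (fun x => ((P.rnDeriv R x).toReal)⁻¹) (P.restrict S) ∧
    ∫ x in S, ((P.rnDeriv R x).toReal)⁻¹ ∂P ≤ (R S).toReal := by
  set r := P.rnDeriv R with hr
  set g : ℝ → ℝ := fun x => ((r x).toReal)⁻¹ with hg
  have hgmeas : Measurable g := (Measure.measurable_rnDeriv P R).ennreal_toReal.inv
  have hgnn : ∀ x, 0 ≤ g x := fun x => inv_nonneg.mpr ENNReal.toReal_nonneg
  have hpt : ∀ x, r x * ENNReal.ofReal (g x) ≤ 1 := by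
    intro x
    rcases eq_or_ne (r x) ⊤ with h | h
    · simp [hg, h]
    rcases eq_or_ne (r x) 0 with h0 | h0
    · simp [h0]
    · have htp : 0 < (r x).toReal := ENNReal.toReal_pos h0 h
      rw [hg]
      simp only []
      rw [ENNReal.ofReal_inv_of_pos htp, ENNReal.ofReal_toReal h]
      rw [ENNReal.mul_inv_cancel h0 h]
  have hlin : ∫⁻ x in S, ENNReal.ofReal (g x) ∂P ≤ R S := by
    conv_lhs => rw [← Measure.withDensity_rnDeriv_eq P R hPR]
    rw [setLIntegral_withDensity_eq_setLIntegral_mul R (Measure.measurable_rnDeriv P R)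
      hgmeas.ennreal_ofReal hS]
    calc ∫⁻ x in S, r x * ENNReal.ofReal (g x) ∂(R) ≤ ∫⁻ _ in S, 1 ∂(R) :=
          lintegral_mono fun x => hpt x
      _ = R S := by simp
  have hfin : ∫⁻ x in S, ENNReal.ofReal (g x) ∂P < ⊤ :=
    lt_of_le_of_lt hlin (measure_lt_top R S)
  have hint : Integrable g (P.restrict S) := by
    refine ⟨hgmeas.aestronglyMeasurable, ?_⟩
    rw [hasFiniteIntegral_def]
    have : ∀ x, ‖g x‖ₑ = ENNReal.ofReal (g x) := by
      intro x
      rw [enorm_eq_ofReal_abs, abs_of_nonneg (hgnn x)]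
    simpa only [this] using hfin
  refine ⟨hint, ?_⟩
  rw [integral_eq_lintegral_of_nonneg_ae (ae_of_all _ hgnn) hgmeas.aestronglyMeasurable]
  exact ENNReal.toReal_mono (measure_lt_top R S).ne hlin

lemma key_lower [IsProbabilityMeasure P] [IsProbabilityMeasure R] (hPR : P ≪ R)
    (hint : Integrable (fun x => Real.log (P.rnDeriv R x).toReal) P) {C : ℝ}
    (hC : ∫ x, Real.log (P.rnDeriv R x).toReal ∂P ≤ C) {A : Set ℝ} (hA : MeasurableSet A)
    (hp : 1/2 ≤ (P A).toReal) : Real.exp (-(2*(C+2))) ≤ (R A).toReal := by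
  set r := P.rnDeriv R with hr
  set ℓ : ℝ → ℝ := fun x => Real.log ((r x).toReal) with hℓ
  set p := (P A).toReal with hpdef
  set q := (R A).toReal with hqdef
  have hppos : 0 < p := lt_of_lt_of_le (by norm_num) hp
  have hp1 : p ≤ 1 := by rw [hpdef]; exact (ENNReal.toReal_le_of_le_ofReal zero_le_one (by simpa using prob_le_one))
  have hq1 : q ≤ 1 := by rw [hqdef]; exact (ENNReal.toReal_le_of_le_ofReal zero_le_one (by simpa using prob_le_one))
  have hqpos : 0 < q := by
    rcases lt_or_eq_of_le (ENNReal.toReal_nonneg : (0:ℝ) ≤ q) with h | h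
    · exact h
    · exfalso
      have hRA : R A = 0 := by
        have h2 : (R A).toReal = 0 := h.symm
        exact ((ENNReal.toReal_eq_zero_iff _).mp h2).resolve_right (measure_lt_top R A).ne
      have hPA : P A = 0 := hPR hRA
      rw [hpdef, hPA] at hp
      norm_num at hp
  -- a.e. positivity and finiteness of rnDeriv
  have hpos : ∀ᵐ x ∂P, 0 < (r x).toReal := by
    have h1 : ∀ᵐ x ∂P, 0 < r x := Measure.rnDeriv_pos hPR
    have h2 : ∀ᵐ x ∂P, r x < ⊤ := hPR.ae_le (Measure.rnDeriv_lt_top P R)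
    filter_upwards [h1, h2] with x hx1 hx2
    exact ENNReal.toReal_pos hx1.ne' hx2.ne
  obtain ⟨hintA, hboundA⟩ := inv_rnDeriv_setIntegral hPR hA
  obtain ⟨hintAc, hboundAc⟩ := inv_rnDeriv_setIntegral hPR hA.compl
  -- integral over A
  have hIA : p * Real.log (p / q) ≤ ∫ x in A, ℓ x ∂P := by
    have hae : ∀ᵐ x ∂(P.restrict A),
        (Real.log (p/q) + 1) - (p/q) * ((r x).toReal)⁻¹ ≤ ℓ x := by
      refine ae_restrict_of_ae ?_
      filter_upwards [hpos] with x hx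
      have ht := hx
      have hlog := Real.log_le_sub_one_of_pos
        (show 0 < p / (q * (r x).toReal) by positivity)
      have he1 : Real.log (p / (q * (r x).toReal)) =
          Real.log (p / q) - Real.log ((r x).toReal) := by
        rw [Real.log_div hppos.ne' (by positivity), Real.log_div hppos.ne' hqpos.ne',
          Real.log_mul hqpos.ne' hx.ne']
        ring
      have he2 : p / (q * (r x).toReal) = (p/q) * ((r x).toReal)⁻¹ := by
        field_simp
      rw [he1, he2] at hlog
      simp only [hℓ]
      linarith
    have hRHSint : Integrable (fun x => (Real.log (p/q) + 1) - (p/q) * ((r x).toReal)⁻¹)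
        (P.restrict A) := (integrable_const _).sub (hintA.const_mul _)
    have := integral_mono_ae hRHSint (hint.restrict (s := A)) hae
    have hconst : ∫ _ in A, (Real.log (p/q) + 1) ∂P = p * (Real.log (p/q) + 1) := by
      rw [setIntegral_const]; simp [hpdef, smul_eq_mul, measureReal_def]
    rw [integral_sub (integrable_const _) (hintA.const_mul _), hconst, integral_const_mul] at this
    have hq' : (p/q) * ∫ x in A, ((r x).toReal)⁻¹ ∂P ≤ (p/q) * q :=
      mul_le_mul_of_nonneg_left hboundA (by positivity)
    have hpq : (p/q) * q = p := by field_simp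
    nlinarith [this]
  -- integral over Aᶜ
  have hPAc : (P Aᶜ).toReal = 1 - p := by
    rw [prob_compl_eq_one_sub hA, ENNReal.toReal_sub_of_le prob_le_one ENNReal.one_ne_top]
    simp [hpdef]
  have hRAc : (R Aᶜ).toReal = 1 - q := by
    rw [prob_compl_eq_one_sub hA, ENNReal.toReal_sub_of_le prob_le_one ENNReal.one_ne_top]
    simp [hqdef]
  have hIAc : (q - p : ℝ) ≤ ∫ x in Aᶜ, ℓ x ∂P := by
    have hae : ∀ᵐ x ∂(P.restrict Aᶜ), (1:ℝ) - ((r x).toReal)⁻¹ ≤ ℓ x := by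
      refine ae_restrict_of_ae ?_
      filter_upwards [hpos] with x hx
      have hlog := Real.log_le_sub_one_of_pos (show 0 < ((r x).toReal)⁻¹ by positivity)
      rw [Real.log_inv] at hlog
      simp only [hℓ]
      linarith
    have hRHSint : Integrable (fun x => (1:ℝ) - ((r x).toReal)⁻¹) (P.restrict Aᶜ) :=
      (integrable_const _).sub hintAc
    have := integral_mono_ae hRHSint (hint.restrict (s := Aᶜ)) hae
    rw [integral_sub (integrable_const _) hintAc, setIntegral_const, measureReal_def, hPAc] at this
    have h2 : ∫ x in Aᶜ, ((r x).toReal)⁻¹ ∂P ≤ 1 - q := hRAc ▸ hboundAc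
    simp only [smul_eq_mul, mul_one] at this
    linarith
  -- combine
  have hsplit : ∫ x in A, ℓ x ∂P + ∫ x in Aᶜ, ℓ x ∂P = ∫ x, ℓ x ∂P :=
    integral_add_compl hA hint
  have htot : p * Real.log (p/q) + (q - p) ≤ C := by
    have := hC
    linarith [hIA, hIAc, hsplit]
  -- arithmetic
  have hlogp : Real.log p ≥ -1 := by
    have h2 : Real.log 2 ≤ 1 := by
      linarith [Real.log_le_sub_one_of_pos (show (0:ℝ) < 2 by norm_num)]
    have : Real.log (1/2) ≤ Real.log p := Real.log_le_log (by norm_num) (by linarith)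
    rw [Real.log_div one_ne_zero two_ne_zero, Real.log_one] at this
    linarith
  have hlogp0 : Real.log p ≤ 0 := Real.log_nonpos hppos.le hp1
  have hplogp : p * Real.log p ≥ -1 := by nlinarith
  have hlogq0 : Real.log q ≤ 0 := Real.log_nonpos hqpos.le hq1
  have hexp : p * Real.log (p/q) = p * Real.log p - p * Real.log q := by
    rw [Real.log_div hppos.ne' hqpos.ne']; ring
  have hplq : -(p * Real.log q) ≥ -(1/2) * Real.log q := by nlinarith
  have hfin : -Real.log q ≤ 2 * (C + 2) := by nlinarith
  have : -(2*(C+2)) ≤ Real.log q := by linarith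
  calc Real.exp (-(2*(C+2))) ≤ Real.exp (Real.log q) := Real.exp_le_exp.mpr this
    _ = q := Real.exp_log hqpos
end Key
section Conc
variable {Q : Measure ℝ} [IsProbabilityMeasure Q] {β : ℝ}

lemma Num_le {S : Set ℝ} (hS : MeasurableSet S) {c : ℝ} (hSc : ∀ x ∈ S, β * x ≤ c) :
    ∫⁻ x in S, ENNReal.ofReal (Real.exp (β * x)) ∂Q ≤ ENNReal.ofReal (Real.exp c) := by
  calc ∫⁻ x in S, ENNReal.ofReal (Real.exp (β * x)) ∂Q
      ≤ ∫⁻ _ in S, ENNReal.ofReal (Real.exp c) ∂Q := by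
        refine setLIntegral_mono' hS fun x hx => ?_
        exact ENNReal.ofReal_le_ofReal (Real.exp_le_exp.mpr (hSc x hx))
    _ = ENNReal.ofReal (Real.exp c) * Q S := by simp [mul_comm]
    _ ≤ ENNReal.ofReal (Real.exp c) * 1 := mul_le_mul_right prob_le_one _
    _ = ENNReal.ofReal (Real.exp c) := mul_one _

lemma Pexp_toReal_le' {S : Set ℝ} (hS : MeasurableSet S) {c : ℝ}
    (hSc : ∀ x ∈ S, β * x ≤ c) {D : ℝ} (hD : 0 < D) (hZ : ENNReal.ofReal D ≤ Z Q β) :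
    (Pexp Q β S).toReal ≤ Real.exp c / D := by
  have h1 : Pexp Q β S ≤ ENNReal.ofReal (Real.exp c) / ENNReal.ofReal D := by
    rw [Pexp_apply hS]
    exact ENNReal.div_le_div (Num_le hS hSc) hZ
  have h2 : ENNReal.ofReal (Real.exp c) / ENNReal.ofReal D =
      ENNReal.ofReal (Real.exp c / D) := (ENNReal.ofReal_div_of_pos hD).symm
  calc (Pexp Q β S).toReal ≤ (ENNReal.ofReal (Real.exp c / D)).toReal := by
        refine ENNReal.toReal_mono (by simp) ?_
        rw [← h2]; exact h1
    _ ≤ Real.exp c / D := by rw [ENNReal.toReal_ofReal (by positivity)]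

lemma Z_ge_set {T : Set ℝ} (hT : MeasurableSet T) {d : ℝ} (hTd : ∀ x ∈ T, d ≤ β * x) :
    ENNReal.ofReal (Real.exp d * (Q T).toReal) ≤ Z Q β := by
  calc ENNReal.ofReal (Real.exp d * (Q T).toReal)
      = ENNReal.ofReal (Real.exp d) * Q T := by
        rw [ENNReal.ofReal_mul (Real.exp_pos _).le, ENNReal.ofReal_toReal (measure_ne_top Q T)]
    _ = ∫⁻ _ in T, ENNReal.ofReal (Real.exp d) ∂Q := by simp [mul_comm]
    _ ≤ ∫⁻ x in T, ENNReal.ofReal (Real.exp (β * x)) ∂Q := by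
        refine setLIntegral_mono' hT fun x hx => ?_
        exact ENNReal.ofReal_le_ofReal (Real.exp_le_exp.mpr (hTd x hx))
    _ ≤ Z Q β := setLIntegral_le_lintegral _ _

lemma Pexp_toReal_le {S T : Set ℝ} (hS : MeasurableSet S) (hT : MeasurableSet T) {c d : ℝ}
    (hSc : ∀ x ∈ S, β * x ≤ c) (hTd : ∀ x ∈ T, d ≤ β * x) (hTpos : 0 < Q T) :
    (Pexp Q β S).toReal ≤ Real.exp c / (Real.exp d * (Q T).toReal) := by
  have hq : 0 < (Q T).toReal := ENNReal.toReal_pos hTpos.ne' (measure_ne_top Q T)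
  exact Pexp_toReal_le' hS hSc (by positivity) (Z_ge_set hT hTd)

/-- Concentration near the left endpoint, as `β → -∞`. -/
lemma conc_left {a₀ : ℝ} (ha : ∀ᵐ x ∂Q, a₀ ≤ x) {ε : ℝ} (hε : 0 < ε)
    (hq : 0 < Q {x | x < a₀ + ε/2}) :
    ∃ β ∈ Γcan Q, (Pexp Q β {x | a₀ + ε < x}).toReal ≤ 1/2 := by
  set qT : ℝ := (Q {x | x < a₀ + ε/2}).toReal with hqT
  have hqTpos : 0 < qT := ENNReal.toReal_pos hq.ne' (measure_ne_top Q _)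
  have hqT1 : qT ≤ 1 := by
    rw [hqT]
    exact ENNReal.toReal_le_of_le_ofReal zero_le_one (by simpa using prob_le_one)
  set β : ℝ := (2/ε) * Real.log (qT/2) with hβ
  have hβ0 : β ≤ 0 := by
    have : Real.log (qT/2) ≤ 0 := Real.log_nonpos (by positivity) (by linarith)
    have h2 : 0 < 2/ε := by positivity
    nlinarith
  refine ⟨β, neg_mem_Γ ha hβ0, ?_⟩
  have hbound := Pexp_toReal_le (β := β) (Q := Q)
    (S := {x | a₀ + ε < x}) (T := {x | x < a₀ + ε/2})
    (measurableSet_lt measurable_const measurable_id)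
    (measurableSet_lt measurable_id measurable_const)
    (c := β * (a₀ + ε)) (d := β * (a₀ + ε/2))
    (fun x hx => mul_le_mul_of_nonpos_left (le_of_lt hx) hβ0)
    (fun x hx => mul_le_mul_of_nonpos_left (le_of_lt hx) hβ0)
    hq
  refine le_trans hbound (le_of_eq ?_)
  have hexp : Real.exp (β * (a₀ + ε)) = Real.exp (β * (a₀ + ε/2)) * Real.exp (β * (ε/2)) := by
    rw [← Real.exp_add]; congr 1; ring
  have hβε : Real.exp (β * (ε/2)) = qT/2 := by
    rw [hβ]
    have : 2/ε * Real.log (qT/2) * (ε/2) = Real.log (qT/2) := by field_simp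
    rw [this, Real.exp_log (by positivity)]
  rw [hexp, hβε, ← hqT]
  have h1 : Real.exp (β * (a₀ + ε/2)) ≠ 0 := (Real.exp_pos _).ne'
  rw [show Real.exp (β * (a₀ + ε / 2)) * (qT / 2) / (Real.exp (β * (a₀ + ε / 2)) * qT)
    = 1/2 from by field_simp]

/-- Concentration near the right endpoint, as `β → +∞` (needs all of `[0,∞)` in `Γ`). -/
lemma conc_right {b₀ : ℝ} (hb : ∀ᵐ x ∂Q, x ≤ b₀) {ε : ℝ} (hε : 0 < ε)
    (hq : 0 < Q {x | b₀ - ε/2 < x}) (hΓ : ∀ γ : ℝ, 0 ≤ γ → γ ∈ Γcan Q) :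
    ∃ β ∈ Γcan Q, (Pexp Q β {x | x < b₀ - ε}).toReal ≤ 1/2 := by
  set qT : ℝ := (Q {x | b₀ - ε/2 < x}).toReal with hqT
  have hqTpos : 0 < qT := ENNReal.toReal_pos hq.ne' (measure_ne_top Q _)
  have hqT1 : qT ≤ 1 := by
    rw [hqT]
    exact ENNReal.toReal_le_of_le_ofReal zero_le_one (by simpa using prob_le_one)
  set β : ℝ := (2/ε) * Real.log (2/qT) with hβ
  have hβ0 : 0 ≤ β := by
    have : 0 ≤ Real.log (2/qT) := Real.log_nonneg (by rw [le_div_iff₀ hqTpos]; linarith)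
    positivity
  refine ⟨β, hΓ β hβ0, ?_⟩
  have hbound := Pexp_toReal_le (β := β) (Q := Q)
    (S := {x | x < b₀ - ε}) (T := {x | b₀ - ε/2 < x})
    (measurableSet_lt measurable_id measurable_const)
    (measurableSet_lt measurable_const measurable_id)
    (c := β * (b₀ - ε)) (d := β * (b₀ - ε/2))
    (fun x hx => mul_le_mul_of_nonneg_left (le_of_lt hx) hβ0)
    (fun x hx => mul_le_mul_of_nonneg_left (le_of_lt hx) hβ0)
    hq
  refine le_trans hbound (le_of_eq ?_)
  have hexp : Real.exp (β * (b₀ - ε/2)) = Real.exp (β * (b₀ - ε)) * Real.exp (β * (ε/2)) := by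
    rw [← Real.exp_add]; congr 1; ring
  have hβε : Real.exp (β * (ε/2)) = 2/qT := by
    rw [hβ]
    have : 2/ε * Real.log (2/qT) * (ε/2) = Real.log (2/qT) := by field_simp
    rw [this, Real.exp_log (by positivity)]
  rw [hexp, hβε, ← hqT]
  have h1 : Real.exp (β * (b₀ - ε)) ≠ 0 := (Real.exp_pos _).ne'
  rw [show Real.exp (β * (b₀ - ε)) / (Real.exp (β * (b₀ - ε)) * (2 / qT) * qT)
    = 1/2 from by field_simp]

/-- Escape of mass to `+∞` when `Γ` is unbounded above. -/
lemma conc_tail_unbounded (hnb : ¬ BddAbove (Γcan Q)) (hq : ∀ t : ℝ, 0 < Q {x | t < x})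
    (t : ℝ) : ∃ β ∈ Γcan Q, (Pexp Q β {x | x ≤ t}).toReal ≤ 1/2 := by
  set M : ℝ := max t 0 + 1 with hM
  set qT : ℝ := (Q {x | M < x}).toReal with hqT
  have hqTpos : 0 < qT := ENNReal.toReal_pos (hq M).ne' (measure_ne_top Q _)
  have hqT1 : qT ≤ 1 := ENNReal.toReal_le_of_le_ofReal zero_le_one (by simpa using prob_le_one)
  set β : ℝ := Real.log (2/qT) with hβ
  have hβ0 : 0 ≤ β := Real.log_nonneg (by rw [le_div_iff₀ hqTpos]; linarith)
  obtain ⟨β', hβ'Γ, hββ'⟩ : ∃ β' ∈ Γcan Q, β ≤ β' := by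
    rcases not_bddAbove_iff.mp hnb β with ⟨β', hβ', h⟩
    exact ⟨β', hβ', h.le⟩
  refine ⟨β, mem_Γ_of_le hβ0 hββ' hβ'Γ, ?_⟩
  have hbound := Pexp_toReal_le (β := β) (Q := Q)
    (S := {x | x ≤ t}) (T := {x | M < x})
    (measurableSet_le measurable_id measurable_const)
    (measurableSet_lt measurable_const measurable_id)
    (c := β * max t 0) (d := β * M)
    (fun x hx => mul_le_mul_of_nonneg_left (le_trans hx (le_max_left _ _)) hβ0)
    (fun x hx => mul_le_mul_of_nonneg_left (le_of_lt hx) hβ0)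
    (hq M)
  refine le_trans hbound (le_of_eq ?_)
  have hexp : Real.exp (β * M) = Real.exp (β * max t 0) * Real.exp β := by
    rw [← Real.exp_add]; congr 1; rw [hM]; ring
  have hβval : Real.exp β = 2/qT := by rw [hβ, Real.exp_log (by positivity)]
  rw [hexp, hβval, ← hqT]
  have h1 : Real.exp (β * max t 0) ≠ 0 := (Real.exp_pos _).ne'
  rw [show Real.exp (β * max t 0) / (Real.exp (β * max t 0) * (2 / qT) * qT)
    = 1/2 from by field_simp]

end Conc
section SSup
variable {Q : Measure ℝ} [IsProbabilityMeasure Q]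

lemma conc_tail_sSup (hbdd : BddAbove (Γcan Q)) (hsup : sSup (Γcan Q) ∉ Γcan Q)
    (hq : ∀ t : ℝ, 0 < Q {x | t < x}) (t : ℝ) :
    ∃ β ∈ Γcan Q, (Pexp Q β {x | x ≤ t}).toReal ≤ 1/2 := by
  set βs := sSup (Γcan Q) with hβs
  have hne : (Γcan Q).Nonempty := ⟨0, zero_mem_Γ⟩
  have hβs0 : 0 ≤ βs := le_csSup hbdd zero_mem_Γ
  set M : ℝ := max t 0 + 1 with hM
  have hM0 : 0 ≤ M := by have := le_max_right t 0; rw [hM]; linarith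
  set S := {x : ℝ | M < x} with hS
  have hSmeas : MeasurableSet S := measurableSet_lt measurable_const measurable_id
  have hZtop : Z Q βs = ⊤ := by
    by_contra h
    exact hsup (lt_top_iff_ne_top.mpr h)
  have htail : ∫⁻ x in S, ENNReal.ofReal (Real.exp (βs * x)) ∂Q = ⊤ := by
    by_contra h
    have hcompl : ∫⁻ x in Sᶜ, ENNReal.ofReal (Real.exp (βs * x)) ∂Q
        ≤ ENNReal.ofReal (Real.exp (βs * M)) := by
      refine Num_le hSmeas.compl fun x hx => ?_
      exact mul_le_mul_of_nonneg_left (not_lt.mp hx) hβs0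
    have hsplit := lintegral_add_compl (μ := Q)
      (fun x => ENNReal.ofReal (Real.exp (βs * x))) hSmeas
    have : Z Q βs < ⊤ := by
      rw [Z, ← hsplit]
      exact ENNReal.add_lt_top.mpr ⟨lt_top_iff_ne_top.mpr h,
        lt_of_le_of_lt hcompl ENNReal.ofReal_lt_top⟩
    exact absurd this (by simp [hZtop])
  -- increasing sequence approaching βs
  set b : ℕ → ℝ := fun n => βs * (1 - 1/(n+1)) with hb
  have hble : ∀ n, b n ≤ βs := by
    intro n
    rw [hb]
    have h1 : (0:ℝ) < 1/(n+1) := by positivity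
    nlinarith
  have hb0 : ∀ n, 0 ≤ b n := by
    intro n
    rw [hb]
    have h1 : 1/((n:ℝ)+1) ≤ 1 := by
      rw [div_le_one (by positivity)]; linarith [Nat.cast_nonneg (α := ℝ) n]
    nlinarith
  have hbmem : ∀ n, b n ∈ Γcan Q := by
    intro n
    rcases eq_or_lt_of_le (hble n) with h | h
    · exfalso
      have h1 : (0:ℝ) < 1/(n+1) := by positivity
      have hβspos : 0 < βs := by
        rcases eq_or_lt_of_le hβs0 with h0 | h0
        · exact absurd (show βs ∈ Γcan Q from h0 ▸ zero_mem_Γ) hsup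
        · exact h0
      rw [hb] at h
      nlinarith
    · obtain ⟨β', hβ', hββ'⟩ := exists_lt_of_lt_csSup hne h
      exact mem_Γ_of_le (hb0 n) hββ'.le hβ'
  have hbmono : Monotone b := by
    intro m n hmn
    rw [hb]
    have h1 : 1/((n:ℝ)+1) ≤ 1/((m:ℝ)+1) := by
      apply one_div_le_one_div_of_le (by positivity)
      have := (Nat.cast_le (α := ℝ)).mpr hmn
      linarith
    nlinarith
  -- monotone convergence
  set f : ℕ → ℝ → ℝ≥0∞ := fun n x => ENNReal.ofReal (Real.exp (b n * max x M)) with hf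
  have hfmeas : ∀ n, Measurable (f n) :=
    fun n => ((measurable_const.mul (measurable_id.max measurable_const)).exp).ennreal_ofReal
  have hfmono : Monotone f := by
    intro m n hmn x
    refine ENNReal.ofReal_le_ofReal (Real.exp_le_exp.mpr ?_)
    refine mul_le_mul_of_nonneg_right (hbmono hmn) ?_
    exact le_trans hM0 (le_max_right x M)
  have hMCT := lintegral_iSup hfmeas hfmono (μ := Q.restrict S)
  have hsup_pt : ∀ x ∈ S, (⨆ n, f n x) = ENNReal.ofReal (Real.exp (βs * x)) := by
    intro x hx
    have hxM : max x M = x := max_eq_left (le_of_lt hx)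
    have hx0 : 0 ≤ x := le_trans hM0 (le_of_lt hx)
    refine le_antisymm (iSup_le fun n => ?_) ?_
    · rw [hf]
      simp only [hxM]
      exact ENNReal.ofReal_le_ofReal (Real.exp_le_exp.mpr
        (mul_le_mul_of_nonneg_right (hble n) hx0))
    · have hbnd : Tendsto b atTop (𝓝 βs) := by
        have h0 : Tendsto (fun n : ℕ => 1/((n:ℝ)+1)) atTop (𝓝 0) :=
          tendsto_one_div_add_atTop_nhds_zero_nat
        have h1 : Tendsto (fun n : ℕ => βs * (1 - 1/((n:ℝ)+1))) atTop (𝓝 (βs * (1 - 0))) :=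
          (tendsto_const_nhds.sub h0).const_mul βs
        rw [hb]
        simpa [one_div] using h1
      have htnd : Tendsto (fun n => f n x) atTop (𝓝 (ENNReal.ofReal (Real.exp (βs * x)))) := by
        rw [hf]
        simp only [hxM]
        exact (ENNReal.continuous_ofReal.tendsto _).comp
          ((Real.continuous_exp.tendsto _).comp (hbnd.mul_const x))
      exact le_of_tendsto htnd (Eventually.of_forall fun n => le_iSup (fun n => f n x) n)
  have heqS : ∫⁻ x in S, (⨆ n, f n x) ∂Q = ⊤ := by
    rw [setLIntegral_congr_fun hSmeas hsup_pt]
    exact htail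
  have heqn : ∀ n, ∫⁻ x in S, f n x ∂Q = ∫⁻ x in S, ENNReal.ofReal (Real.exp (b n * x)) ∂Q := by
    intro n
    refine setLIntegral_congr_fun hSmeas (fun x hx => ?_)
    rw [hf]
    simp only [max_eq_left (le_of_lt (show M < x from hx))]
  have hsup_int : (⨆ n, ∫⁻ x in S, ENNReal.ofReal (Real.exp (b n * x)) ∂Q) = ⊤ := by
    simp_rw [← heqn]
    rw [← hMCT]
    exact heqS
  -- pick n with large tail integral
  have hlt : ENNReal.ofReal (2 * Real.exp (βs * max t 0)) <
      ⨆ n, ∫⁻ x in S, ENNReal.ofReal (Real.exp (b n * x)) ∂Q := by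
    rw [hsup_int]; exact ENNReal.ofReal_lt_top
  obtain ⟨n, hn⟩ := lt_iSup_iff.mp hlt
  refine ⟨b n, hbmem n, ?_⟩
  have hZge : ENNReal.ofReal (2 * Real.exp (βs * max t 0)) ≤ Z Q (b n) :=
    le_trans hn.le (setLIntegral_le_lintegral _ _)
  have hbound := Pexp_toReal_le' (β := b n) (Q := Q) (S := {x | x ≤ t})
    (measurableSet_le measurable_id measurable_const)
    (c := b n * max t 0)
    (fun x hx => mul_le_mul_of_nonneg_left (le_trans hx (le_max_left _ _)) (hb0 n))
    (D := 2 * Real.exp (βs * max t 0)) (by positivity) hZge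
  refine le_trans hbound ?_
  have hexple : Real.exp (b n * max t 0) ≤ Real.exp (βs * max t 0) :=
    Real.exp_le_exp.mpr (mul_le_mul_of_nonneg_right (hble n) (le_max_right t 0))
  rw [div_le_iff₀ (by positivity)]
  nlinarith [Real.exp_pos (βs * max t 0)]

end SSup
section Atom

lemma half_ge {P : Measure ℝ} [IsProbabilityMeasure P] {A B : Set ℝ}
    (hA : MeasurableSet A) (hsub : ∀ᵐ x ∂P, x ∈ Aᶜ → x ∈ B) (hB : (P B).toReal ≤ 1/2) :
    1/2 ≤ (P A).toReal := by
  have h1 : P Aᶜ ≤ P B := measure_mono_ae hsub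
  have h2 : (P Aᶜ).toReal ≤ 1/2 :=
    le_trans (ENNReal.toReal_mono (measure_ne_top P B) h1) hB
  have h3 : (P A).toReal = 1 - (P Aᶜ).toReal := by
    have h4 : P A = 1 - P Aᶜ := by
      rw [← prob_compl_eq_one_sub hA.compl, compl_compl]
    rw [h4, ENNReal.toReal_sub_of_le prob_le_one ENNReal.one_ne_top, ENNReal.toReal_one]
  linarith

lemma atom_of_conc (Qdom : Measure ℝ) [IsProbabilityMeasure Qdom] {δ : ℝ} (hδ : 0 < δ)
    (A : ℕ → Set ℝ) (hmeas : ∀ n, MeasurableSet (A n)) (hanti : Antitone A)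
    (hempty : ⋂ n, A n = ∅) (hge : ∀ n, δ ≤ (Qdom (A n)).toReal) : False := by
  have h1 : Tendsto (fun n => Qdom (A n)) atTop (𝓝 0) := by
    have h := tendsto_measure_iInter_atTop (μ := Qdom)
      (fun n => (hmeas n).nullMeasurableSet) hanti ⟨0, measure_ne_top _ _⟩
    rw [hempty, measure_empty] at h
    exact h
  have h2 : ∀ᶠ n in atTop, Qdom (A n) < ENNReal.ofReal δ :=
    h1.eventually_lt_const (by simp [hδ])
  obtain ⟨n, hn⟩ := h2.exists
  exact absurd hn (not_lt.mpr (ENNReal.ofReal_le_of_le_toReal (hge n)))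

variable {Q Qdom : Measure ℝ} [IsProbabilityMeasure Q] [IsProbabilityMeasure Qdom] {δ : ℝ}

/-- If the dominating measure gives mass `≥ δ` to every set on which some member
concentrates, then `Q` has an atom at its essential infimum. -/
lemma left_atom (hδ : 0 < δ) {a₀ : ℝ}
    (ha0 : Q {x | x < a₀} = 0) (hq : ∀ ε : ℝ, 0 < ε → 0 < Q {x | x < a₀ + ε})
    (hkey : ∀ β ∈ Γcan Q, ∀ A : Set ℝ, MeasurableSet A →
      1/2 ≤ ((Pexp Q β) A).toReal → δ ≤ (Qdom A).toReal) :
    0 < Q {a₀} := by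
  by_contra hno
  have hQa : Q {a₀} = 0 := by
    rcases eq_or_lt_of_le ((zero_le : 0 ≤ Q {a₀})) with h | h
    · exact h.symm
    · exact absurd h hno
  have ha : ∀ᵐ x ∂Q, a₀ ≤ x := by
    rw [ae_iff]
    convert ha0 using 2
    ext x; simp [not_le]
  set A : ℕ → Set ℝ := fun n => {x | a₀ < x ∧ x ≤ a₀ + 1/(n+1)} with hA
  have hmeas : ∀ n, MeasurableSet (A n) :=
    fun n => (measurableSet_lt measurable_const measurable_id).inter
      (measurableSet_le measurable_id measurable_const)
  have hanti : Antitone A := by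
    intro m n hmn x hx
    obtain ⟨h1, h2⟩ := hx
    refine ⟨h1, le_trans h2 ?_⟩
    have : 1/((n:ℝ)+1) ≤ 1/((m:ℝ)+1) := by
      apply one_div_le_one_div_of_le (by positivity)
      have := (Nat.cast_le (α := ℝ)).mpr hmn
      linarith
    linarith
  have hempty : ⋂ n, A n = ∅ := by
    ext x
    simp only [mem_iInter, mem_empty_iff_false, iff_false, not_forall]
    by_cases hx : a₀ < x
    · obtain ⟨n, hn⟩ := exists_nat_one_div_lt (show (0:ℝ) < x - a₀ by linarith)
      exact ⟨n, fun h => absurd h.2 (by push_neg; linarith)⟩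
    · exact ⟨0, fun h => absurd h.1 hx⟩
  refine atom_of_conc Qdom hδ A hmeas hanti hempty fun n => ?_
  set ε : ℝ := 1/(n+1) with hε
  have hεpos : (0:ℝ) < ε := by positivity
  obtain ⟨β, hβΓ, hβconc⟩ := conc_left ha hεpos (hq (ε/2) (by positivity))
  haveI := isProb_Pexp hβΓ
  refine hkey β hβΓ (A n) (hmeas n) ?_
  refine half_ge (hmeas n) ?_ hβconc
  have h1 : ∀ᵐ x ∂(Pexp Q β), a₀ ≤ x := ae_Pexp ha
  have h2 : ∀ᵐ x ∂(Pexp Q β), x ≠ a₀ := by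
    refine ae_Pexp (Q := Q) ?_
    rw [ae_iff]
    convert hQa using 2
    ext x; simp [eq_comm]
  filter_upwards [h1, h2] with x hx1 hx2 hx3
  simp only [mem_compl_iff, hA, mem_setOf_eq, not_and, not_le] at hx3
  have hgt : a₀ < x := lt_of_le_of_ne hx1 (Ne.symm hx2)
  exact hx3 hgt

/-- Mirror image: atom at the essential supremum. -/
lemma right_atom (hδ : 0 < δ) {b₀ : ℝ}
    (hb0 : Q {x | b₀ < x} = 0) (hq : ∀ ε : ℝ, 0 < ε → 0 < Q {x | b₀ - ε < x})
    (hΓ : ∀ γ : ℝ, 0 ≤ γ → γ ∈ Γcan Q)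
    (hkey : ∀ β ∈ Γcan Q, ∀ A : Set ℝ, MeasurableSet A →
      1/2 ≤ ((Pexp Q β) A).toReal → δ ≤ (Qdom A).toReal) :
    0 < Q {b₀} := by
  by_contra hno
  have hQb : Q {b₀} = 0 := by
    rcases eq_or_lt_of_le ((zero_le : 0 ≤ Q {b₀})) with h | h
    · exact h.symm
    · exact absurd h hno
  have hb : ∀ᵐ x ∂Q, x ≤ b₀ := by
    rw [ae_iff]
    convert hb0 using 2
    ext x; simp [not_le]
  set A : ℕ → Set ℝ := fun n => {x | b₀ - 1/(n+1) ≤ x ∧ x < b₀} with hA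
  have hmeas : ∀ n, MeasurableSet (A n) :=
    fun n => (measurableSet_le measurable_const measurable_id).inter
      (measurableSet_lt measurable_id measurable_const)
  have hanti : Antitone A := by
    intro m n hmn x hx
    obtain ⟨h1, h2⟩ := hx
    refine ⟨le_trans ?_ h1, h2⟩
    have : 1/((n:ℝ)+1) ≤ 1/((m:ℝ)+1) := by
      apply one_div_le_one_div_of_le (by positivity)
      have := (Nat.cast_le (α := ℝ)).mpr hmn
      linarith
    linarith
  have hempty : ⋂ n, A n = ∅ := by
    ext x
    simp only [mem_iInter, mem_empty_iff_false, iff_false, not_forall]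
    by_cases hx : x < b₀
    · obtain ⟨n, hn⟩ := exists_nat_one_div_lt (show (0:ℝ) < b₀ - x by linarith)
      exact ⟨n, fun h => absurd h.1 (by push_neg; linarith)⟩
    · exact ⟨0, fun h => absurd h.2 hx⟩
  refine atom_of_conc Qdom hδ A hmeas hanti hempty fun n => ?_
  set ε : ℝ := 1/(n+1) with hε
  have hεpos : (0:ℝ) < ε := by positivity
  obtain ⟨β, hβΓ, hβconc⟩ := conc_right hb hεpos (hq (ε/2) (by positivity)) hΓ
  haveI := isProb_Pexp hβΓ
  refine hkey β hβΓ (A n) (hmeas n) ?_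
  refine half_ge (hmeas n) ?_ hβconc
  have h1 : ∀ᵐ x ∂(Pexp Q β), x ≤ b₀ := ae_Pexp hb
  have h2 : ∀ᵐ x ∂(Pexp Q β), x ≠ b₀ := by
    refine ae_Pexp (Q := Q) ?_
    rw [ae_iff]
    convert hQb using 2
    ext x; simp [eq_comm]
  filter_upwards [h1, h2] with x hx1 hx2 hx3
  simp only [mem_compl_iff, hA, mem_setOf_eq, not_and, not_lt] at hx3
  have hlt : x < b₀ := lt_of_le_of_ne hx1 hx2
  show x < b₀ - 1/(n+1)
  by_contra hcon
  push_neg at hcon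
  exact absurd (hx3 hcon) (not_le.mpr hlt)

/-- If mass escapes to `+∞` along the family, `Qdom` cannot dominate. -/
lemma tail_contra (hδ : 0 < δ)
    (hconc : ∀ t : ℝ, ∃ β ∈ Γcan Q, (Pexp Q β {x | x ≤ t}).toReal ≤ 1/2)
    (hkey : ∀ β ∈ Γcan Q, ∀ A : Set ℝ, MeasurableSet A →
      1/2 ≤ ((Pexp Q β) A).toReal → δ ≤ (Qdom A).toReal) : False := by
  set A : ℕ → Set ℝ := fun n => {x | (n:ℝ) < x} with hA
  have hmeas : ∀ n, MeasurableSet (A n) :=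
    fun n => measurableSet_lt measurable_const measurable_id
  have hanti : Antitone A := by
    intro m n hmn x hx
    exact lt_of_le_of_lt ((Nat.cast_le (α := ℝ)).mpr hmn) hx
  have hempty : ⋂ n, A n = ∅ := by
    ext x
    simp only [mem_iInter, mem_empty_iff_false, iff_false, not_forall]
    obtain ⟨n, hn⟩ := exists_nat_gt x
    exact ⟨n, fun h => absurd h (by simp [hA]; linarith)⟩
  refine atom_of_conc Qdom hδ A hmeas hanti hempty fun n => ?_
  obtain ⟨β, hβΓ, hβconc⟩ := hconc (n:ℝ)
  haveI := isProb_Pexp hβΓ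
  refine hkey β hβΓ (A n) (hmeas n) ?_
  refine half_ge (hmeas n) (ae_of_all _ fun x hx => ?_) hβconc
  simpa [hA, not_lt] using hx

end Atom

section Fin
variable {Q : Measure ℝ} [IsProbabilityMeasure Q] {β β' : ℝ}

lemma integral_bound_right (hβ : β ∈ Γcan Q) (hle : β' ≤ β)
    {b₀ : ℝ} (hb : ∀ᵐ x ∂Q, x ≤ b₀) (hatom : 0 < Q {b₀})
    (hint : Integrable (fun x : ℝ => (β - β') * x) (Pexp Q β)) :
    ∫ x, ((β - β') * x + (ψ Q β' - ψ Q β)) ∂(Pexp Q β) ≤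
      ψ Q β' - β' * b₀ - Real.log (Q {b₀}).toReal := by
  haveI := isProb_Pexp hβ
  rw [integral_add hint (integrable_const _), integral_const]
  simp only [measure_univ, probReal_univ, ENNReal.toReal_one, one_smul, smul_eq_mul]
  have h1 : ∫ x, (β - β') * x ∂(Pexp Q β) ≤ (β - β') * b₀ := by
    have h0 : ∫ x, ((β - β') * b₀ : ℝ) ∂(Pexp Q β) = (β - β') * b₀ := by
      rw [integral_const]; simp
    rw [← h0]
    refine integral_mono_ae hint (integrable_const _) ?_
    filter_upwards [ae_Pexp (β := β) hb] with x hx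
    exact mul_le_mul_of_nonneg_left hx (by linarith)
  have h2 := ψ_ge_atom (c := b₀) hatom hβ
  linarith

lemma essInf_exists (hlt : ∃ a : ℝ, ∀ᵐ x ∂Q, a ≤ x) :
    ∃ a₀ : ℝ, Q {x | x < a₀} = 0 ∧ (∀ ε : ℝ, 0 < ε → 0 < Q {x | x < a₀ + ε}) := by
  obtain ⟨a, ha⟩ := hlt
  have haS : Q {x | x < a} = 0 := by
    rw [ae_iff] at ha; convert ha using 2; ext x; simp [not_le]
  set S := {a : ℝ | Q {x | x < a} = 0} with hSdef
  have hne : S.Nonempty := ⟨a, haS⟩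
  obtain ⟨n, hn⟩ : ∃ n : ℕ, Q {x : ℝ | x < (n:ℝ)} ≠ 0 := by
    by_contra h
    push_neg at h
    have huniv : (univ : Set ℝ) = ⋃ n : ℕ, {x : ℝ | x < (n:ℝ)} := by
      ext x
      simp only [mem_univ, mem_iUnion, mem_setOf_eq, true_iff]
      exact exists_nat_gt x
    have : Q univ = 0 := by
      rw [huniv]
      exact measure_iUnion_null fun n => h n
    simp [measure_univ] at this
  have hbdd : BddAbove S := by
    refine ⟨n, fun a' ha' => ?_⟩
    by_contra hgt
    push_neg at hgt
    have hsub : {x : ℝ | x < (n:ℝ)} ⊆ {x : ℝ | x < a'} := fun x hx => lt_trans hx hgt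
    exact hn (measure_mono_null hsub ha')
  refine ⟨sSup S, ?_, ?_⟩
  · have hsub : {x : ℝ | x < sSup S} ⊆ ⋃ m : ℕ, {x : ℝ | x < sSup S - 1/(m+1)} := by
      intro x hx
      simp only [mem_iUnion, mem_setOf_eq]
      obtain ⟨m, hm⟩ := exists_nat_one_div_lt (show (0:ℝ) < sSup S - x from by
        simpa using hx)
      exact ⟨m, by linarith⟩
    refine measure_mono_null hsub (measure_iUnion_null fun m => ?_)
    obtain ⟨a', ha', hlt'⟩ := exists_lt_of_lt_csSup hne
      (show sSup S - 1/(m+1) < sSup S from by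
        have : (0:ℝ) < 1/(m+1) := by positivity
        linarith)
    exact measure_mono_null (fun x hx => lt_trans hx hlt') ha'
  · intro ε hε
    by_contra h
    push_neg at h
    have h0 : Q {x | x < sSup S + ε} = 0 := le_antisymm h zero_le
    have : sSup S + ε ≤ sSup S := le_csSup hbdd h0
    linarith

lemma essSup_exists (hbb : ∃ b : ℝ, Q {x | b < x} = 0) :
    ∃ b₀ : ℝ, Q {x | b₀ < x} = 0 ∧ (∀ ε : ℝ, 0 < ε → 0 < Q {x | b₀ - ε < x}) := by
  obtain ⟨b, hb⟩ := hbb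
  set S := {b : ℝ | Q {x | b < x} = 0} with hSdef
  have hne : S.Nonempty := ⟨b, hb⟩
  obtain ⟨n, hn⟩ : ∃ n : ℕ, Q {x : ℝ | -(n:ℝ) < x} ≠ 0 := by
    by_contra h
    push_neg at h
    have huniv : (univ : Set ℝ) = ⋃ n : ℕ, {x : ℝ | -(n:ℝ) < x} := by
      ext x
      simp only [mem_univ, mem_iUnion, mem_setOf_eq, true_iff]
      obtain ⟨m, hm⟩ := exists_nat_gt (-x)
      exact ⟨m, by linarith⟩
    have : Q univ = 0 := by
      rw [huniv]
      exact measure_iUnion_null fun n => h n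
    simp [measure_univ] at this
  have hbdd : BddBelow S := by
    refine ⟨-(n:ℝ), fun b' hb' => ?_⟩
    by_contra hgt
    push_neg at hgt
    have hsub : {x : ℝ | -(n:ℝ) < x} ⊆ {x : ℝ | b' < x} := fun x hx => lt_trans hgt hx
    exact hn (measure_mono_null hsub hb')
  refine ⟨sInf S, ?_, ?_⟩
  · have hsub : {x : ℝ | sInf S < x} ⊆ ⋃ m : ℕ, {x : ℝ | sInf S + 1/(m+1) < x} := by
      intro x hx
      simp only [mem_iUnion, mem_setOf_eq]
      obtain ⟨m, hm⟩ := exists_nat_one_div_lt (show (0:ℝ) < x - sInf S from by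
        simpa using hx)
      exact ⟨m, by linarith⟩
    refine measure_mono_null hsub (measure_iUnion_null fun m => ?_)
    obtain ⟨b', hb', hlt'⟩ := exists_lt_of_csInf_lt hne
      (show sInf S < sInf S + 1/(m+1) from by
        have : (0:ℝ) < 1/(m+1) := by positivity
        linarith)
    exact measure_mono_null (fun x hx => lt_trans hlt' hx) hb'
  · intro ε hε
    by_contra h
    push_neg at h
    have h0 : Q {x | sInf S - ε < x} = 0 := le_antisymm h zero_le
    have : sInf S ≤ sInf S - ε := csInf_le hbdd h0
    linarith

end Fin


/-- if some distribution dominates the left-truncated family in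
information divergence, then some member of the family itself does. -/
theorem dominating_member (Q : Measure ℝ) [IsProbabilityMeasure Q]
    (hlt : LeftTruncated Q)
    (hdom : ∃ Qdom : Measure ℝ, IsProbabilityMeasure Qdom ∧
      (⨆ β ∈ Γcan Q, KL (Pexp Q β) Qdom) < ⊤) :
    ∃ βstar ∈ Γcan Q, (⨆ β ∈ Γcan Q, KL (Pexp Q β) (Pexp Q βstar)) < ⊤ := by
  classical
  obtain ⟨Qdom, hQdomP, hCtop⟩ := hdom
  haveI := hQdomP
  set C : ℝ := (⨆ β ∈ Γcan Q, KL (Pexp Q β) Qdom).toReal with hC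
  have hgood : ∀ β ∈ Γcan Q, (Pexp Q β ≪ Qdom) ∧
      Integrable (fun x => Real.log ((Pexp Q β).rnDeriv Qdom x).toReal) (Pexp Q β) ∧
      ∫ x, Real.log ((Pexp Q β).rnDeriv Qdom x).toReal ∂(Pexp Q β) ≤ C := by
    intro β hβ
    have hle : KL (Pexp Q β) Qdom ≤ ⨆ β ∈ Γcan Q, KL (Pexp Q β) Qdom :=
      le_biSup (fun β => KL (Pexp Q β) Qdom) hβ
    by_cases hcond : (Pexp Q β ≪ Qdom) ∧
        Integrable (fun x => Real.log ((Pexp Q β).rnDeriv Qdom x).toReal) (Pexp Q β)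
    · refine ⟨hcond.1, hcond.2, ?_⟩
      rw [KL, if_pos hcond] at hle
      rcases le_or_gt (∫ x, Real.log ((Pexp Q β).rnDeriv Qdom x).toReal ∂(Pexp Q β)) 0 with h | h
      · exact le_trans h ENNReal.toReal_nonneg
      · have h2 := ENNReal.toReal_mono hCtop.ne hle
        rwa [ENNReal.toReal_ofReal h.le] at h2
    · rw [KL, if_neg hcond] at hle
      exact absurd (lt_of_le_of_lt hle hCtop) (by simp)
  set δ := Real.exp (-(2*(C+2))) with hδdef
  have hδ : 0 < δ := Real.exp_pos _
  have hkey : ∀ β ∈ Γcan Q, ∀ A : Set ℝ, MeasurableSet A →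
      1/2 ≤ ((Pexp Q β) A).toReal → δ ≤ (Qdom A).toReal := by
    intro β hβ A hA hp
    haveI := isProb_Pexp hβ
    obtain ⟨h1, h2, h3⟩ := hgood β hβ
    exact key_lower h1 h2 h3 hA hp
  obtain ⟨a₀, ha0, haq⟩ := essInf_exists hlt
  have ha : ∀ᵐ x ∂Q, a₀ ≤ x := by
    rw [ae_iff]; convert ha0 using 2; ext x; simp [not_le]
  by_cases hbb : ∃ b : ℝ, Q {x | b < x} = 0
  · -- Q has bounded support: take βstar = 0
    obtain ⟨b₀, hb0, hbq⟩ := essSup_exists hbb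
    have hb : ∀ᵐ x ∂Q, x ≤ b₀ := by
      rw [ae_iff]; convert hb0 using 2; ext x; simp [not_le]
    have hΓall : ∀ γ : ℝ, 0 ≤ γ → γ ∈ Γcan Q := fun γ _ => all_mem_Γ_of_bdd ha hb γ
    have hatomL : 0 < Q {a₀} := left_atom hδ ha0 haq hkey
    have hatomR : 0 < Q {b₀} := right_atom hδ hb0 hbq hΓall hkey
    refine ⟨0, zero_mem_Γ, ?_⟩
    set K := max (ψ Q 0 - 0*a₀ - Real.log (Q {a₀}).toReal)
      (ψ Q 0 - 0*b₀ - Real.log (Q {b₀}).toReal) with hK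
    have hbound : ∀ β ∈ Γcan Q, KL (Pexp Q β) (Pexp Q 0) ≤ ENNReal.ofReal K := by
      intro β hβ
      have hint : Integrable (fun x : ℝ => (β - 0) * x) (Pexp Q β) :=
        (int_id_of_bdd ha hb hβ).const_mul _
      rw [KL_Pexp_eq hβ zero_mem_Γ hint]
      rcases le_or_gt β 0 with h | h
      · exact ENNReal.ofReal_le_ofReal (le_trans
          (integral_bound_left hβ zero_mem_Γ h ha hatomL hint) (le_max_left _ _))
      · exact ENNReal.ofReal_le_ofReal (le_trans
          (integral_bound_right hβ h.le hb hatomR hint) (le_max_right _ _))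
    exact lt_of_le_of_lt (iSup₂_le hbound) ENNReal.ofReal_lt_top
  · push_neg at hbb
    have hq : ∀ t : ℝ, 0 < Q {x | t < x} := fun t => pos_iff_ne_zero.mpr (hbb t)
    by_cases hbdd : BddAbove (Γcan Q)
    · by_cases hmem : sSup (Γcan Q) ∈ Γcan Q
      · set βs := sSup (Γcan Q) with hβs
        have hatomL : 0 < Q {a₀} := left_atom hδ ha0 haq hkey
        refine ⟨βs, hmem, ?_⟩
        have hbound : ∀ β ∈ Γcan Q, KL (Pexp Q β) (Pexp Q βs) ≤
            ENNReal.ofReal (ψ Q βs - βs*a₀ - Real.log (Q {a₀}).toReal) := by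
          intro β hβ
          haveI := isProb_Pexp hβ
          have hle : β ≤ βs := le_csSup hbdd hβ
          have hint : Integrable (fun x : ℝ => (β - βs) * x) (Pexp Q β) := by
            rcases lt_or_eq_of_le hle with h | h
            · exact (int_id_of_lt ha hmem h).const_mul _
            · have h0 : (fun x : ℝ => (β - βs) * x) = fun _ => (0:ℝ) := by
                ext x; rw [h]; ring
              rw [h0]; exact integrable_const 0
          rw [KL_Pexp_eq hβ hmem hint]
          exact ENNReal.ofReal_le_ofReal (integral_bound_left hβ hmem hle ha hatomL hint)
        exact lt_of_le_of_lt (iSup₂_le hbound) ENNReal.ofReal_lt_top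
      · exact (tail_contra hδ (conc_tail_sSup hbdd hmem hq) hkey).elim
    · exact (tail_contra hδ (conc_tail_unbounded hbdd hq) hkey).elim
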